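/- On ℝ⁵ with coordinates (V,X,W,Y,Z), let g be the field of symmetric bilinear forms given by g = 2dV·(dX − 2X dW + ½(Y² + Z²) dV + ½(Y dZ − Z dY)) + 2dW·(dY − Y dW − Z dV) + (dZ − Z dW + Y dV)², where each coefficient is the indicated polynomial function of the point, and for λ ∈ ℝ let φ_λ be the linear map φ_λ(V,X,W,Y,Z) = (V e^{−2λ}, X e^{2λ}, W e^{−λ}, Y e^{λ}, Z). Then for every point q ∈ ℝ⁵ and all tangent vectors u,v ∈ ℝ⁵, the pullback (φ_λ^* g)(q)(u,v) = g(φ_λ(q))(φ_λ u, φ_λ v) converges, as λ → ∞, to G(u,v), where G is the constant (flat) form G = 2 dV dX + 2 dW dY + dZ². -/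

import Mathlib

open Filter

namespace Stmt9

/-- Coordinates: `q 0 = V`, `q 1 = X`, `q 2 = W`, `q 3 = Y`, `q 4 = Z`.
The 1-form `dX − 2X dW + ½(Y² + Z²) dV + ½(Y dZ − Z dY)` at the point `q`. -/
noncomputable def ω (q u : Fin 5 → ℝ) : ℝ :=
  u 1 - 2 * q 1 * u 2 + (1 / 2) * (q 3 ^ 2 + q 4 ^ 2) * u 0 +
    (1 / 2) * (q 3 * u 4 - q 4 * u 3)

/-- The 1-form `dY − Y dW − Z dV` at the point `q`. -/
def η (q u : Fin 5 → ℝ) : ℝ := u 3 - q 3 * u 2 - q 4 * u 0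

/-- The 1-form `dZ − Z dW + Y dV` at the point `q`. -/
def σ' (q u : Fin 5 → ℝ) : ℝ := u 4 - q 4 * u 2 + q 3 * u 0

/-- The field of symmetric bilinear forms
`g = 2dV·(dX − 2X dW + ½(Y²+Z²) dV + ½(Y dZ − Z dY)) + 2dW·(dY − Y dW − Z dV)
      + (dZ − Z dW + Y dV)²`. -/
noncomputable def metric (q u v : Fin 5 → ℝ) : ℝ :=
  (u 0 * ω q v + ω q u * v 0) + (u 2 * η q v + η q u * v 2) + σ' q u * σ' q v

/-- The linear map `φ_λ(V,X,W,Y,Z) = (V e^{−2λ}, X e^{2λ}, W e^{−λ}, Y e^{λ}, Z)`. -/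
noncomputable def φ (l : ℝ) (q : Fin 5 → ℝ) : Fin 5 → ℝ :=
  ![q 0 * Real.exp (-2 * l), q 1 * Real.exp (2 * l), q 2 * Real.exp (-l),
    q 3 * Real.exp l, q 4]

/-- The constant flat form `G = 2 dV dX + 2 dW dY + dZ²`. -/
def flatG (u v : Fin 5 → ℝ) : ℝ :=
  u 0 * v 1 + u 1 * v 0 + u 2 * v 3 + u 3 * v 2 + u 4 * v 4

/-!
With `t = e^{-λ}`, the map `φ_λ` rescales `V, X, W, Y, Z` by `t², t⁻², t, t⁻¹, 1`. Pulling the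
three 1-forms back, `φ_λ^* dV · φ_λ^* ω` and `φ_λ^* dW · φ_λ^* η` lose their negative powers
of `t`, so `φ_λ^* g` is the form `g_t` built like `g` from 1-forms whose coefficients are
polynomials in `t`. The family `g_t` is continuous in `t` and `g_0 = G`, and `t → 0` as `λ → ∞`.
-/

noncomputable def rescaledω (t : ℝ) (q u : Fin 5 → ℝ) : ℝ :=
  u 1 - 2 * t * q 1 * u 2 + (1 / 2) * t ^ 2 * (q 3 ^ 2 + t ^ 2 * q 4 ^ 2) * u 0 +
    (1 / 2) * t * (q 3 * u 4 - q 4 * u 3)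

def rescaledη (t : ℝ) (q u : Fin 5 → ℝ) : ℝ := u 3 - t * q 3 * u 2 - t ^ 3 * q 4 * u 0

def rescaledσ (t : ℝ) (q u : Fin 5 → ℝ) : ℝ := u 4 - t * q 4 * u 2 + t * q 3 * u 0

noncomputable def rescaledMetric (t : ℝ) (q u v : Fin 5 → ℝ) : ℝ :=
  (u 0 * rescaledω t q v + rescaledω t q u * v 0) +
    (u 2 * rescaledη t q v + rescaledη t q u * v 2) + rescaledσ t q u * rescaledσ t q v

lemma exp_neg_two_mul (l : ℝ) : Real.exp (-2 * l) = (Real.exp l ^ 2)⁻¹ := by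
  rw [neg_mul, Real.exp_neg, two_mul, Real.exp_add, sq]

lemma exp_two_mul (l : ℝ) : Real.exp (2 * l) = Real.exp l ^ 2 := by
  rw [two_mul, Real.exp_add, sq]

lemma ω_φ (l : ℝ) (q u : Fin 5 → ℝ) :
    ω (φ l q) (φ l u) = Real.exp (2 * l) * rescaledω (Real.exp (-l)) q u := by
  simp only [ω, rescaledω, φ, Matrix.cons_val, exp_neg_two_mul, exp_two_mul, Real.exp_neg]
  field_simp

lemma η_φ (l : ℝ) (q u : Fin 5 → ℝ) :
    η (φ l q) (φ l u) = Real.exp l * rescaledη (Real.exp (-l)) q u := by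
  simp only [η, rescaledη, φ, Matrix.cons_val, exp_neg_two_mul, Real.exp_neg]
  field_simp

lemma σ'_φ (l : ℝ) (q u : Fin 5 → ℝ) :
    σ' (φ l q) (φ l u) = rescaledσ (Real.exp (-l)) q u := by
  simp only [σ', rescaledσ, φ, Matrix.cons_val, exp_neg_two_mul, Real.exp_neg]
  field_simp

lemma metric_φ (l : ℝ) (q u v : Fin 5 → ℝ) :
    metric (φ l q) (φ l u) (φ l v) = rescaledMetric (Real.exp (-l)) q u v := by
  simp only [metric, rescaledMetric, ω_φ, η_φ, σ'_φ]
  simp only [φ, Matrix.cons_val, exp_neg_two_mul, exp_two_mul, Real.exp_neg]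
  field_simp

lemma continuous_rescaledMetric (q u v : Fin 5 → ℝ) :
    Continuous fun t => rescaledMetric t q u v := by
  unfold rescaledMetric rescaledω rescaledη rescaledσ
  fun_prop

lemma rescaledMetric_zero (q u v : Fin 5 → ℝ) : rescaledMetric 0 q u v = flatG u v := by
  simp only [rescaledMetric, rescaledω, rescaledη, rescaledσ, flatG]
  ring

/-- For every point `q` and tangent vectors `u, v`, the pullback
`(φ_λ^* g)(q)(u,v) = g(φ_λ q)(φ_λ u, φ_λ v)` converges to `G(u,v)` as `λ → ∞`. -/
theorem pullback_tendsto_flat (q u v : Fin 5 → ℝ) :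
    Tendsto (fun l : ℝ => metric (φ l q) (φ l u) (φ l v)) atTop (nhds (flatG u v)) := by
  have h := ((continuous_rescaledMetric q u v).tendsto 0).comp
    Real.tendsto_exp_neg_atTop_nhds_zero
  simpa only [Function.comp_def, ← metric_φ, rescaledMetric_zero] using h

end Stmt9
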